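/- There exist α > 0 and C > 0 with the following properties. Let ψ : (0,∞) → ℝ be C¹ with finite energy E(ψ,0), and let r₀ ∈ (0,∞). (a) If lim_{r→0} ψ(r) = 0 and E₀^{r₀}(ψ,0) < α, then ∫₀^{r₀} (ψ'(r)² + ψ(r)²/r²) r dr ≤ C · E₀^{r₀}(ψ,0). (b) If lim_{r→∞} ψ(r) = π and E_{r₀}^∞(ψ,0) < α, then ∫_{r₀}^∞ (ψ'(r)² + (ψ(r)−π)²/r²) r dr ≤ C · E_{r₀}^∞(ψ,0). -/

import Mathlib

/-!
Write `G(x) = ∫₀ˣ |sin ρ| dρ`. Along `ψ`, `|(G ∘ ψ)'| = |sin ψ| |ψ'| ≤ ½ (ψ'² + sin²ψ / r²) r` by AM-GM,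
so `G ∘ ψ` oscillates by at most half the energy. Since `G(ψ) → 0` at the endpoint, an energy below `2`
keeps `|G(ψ)| < 1 = G(π/2)`, hence `|ψ| ≤ π/2`, where Jordan's inequality gives `ψ² ≤ (π²/4) sin²ψ`.
This proves the theorem with `α = 2` and `C = π²/4`; the endpoint `π` reduces to the endpoint `0`
by the shift `ψ ↦ ψ - π`, which leaves the energy density unchanged.
-/

open MeasureTheory Filter Set Real Topology

noncomputable section

def absSinPrimitive (x : ℝ) : ℝ := ∫ t in (0 : ℝ)..x, |sin t|

theorem hasDerivAt_absSinPrimitive (x : ℝ) : HasDerivAt absSinPrimitive |sin x| x :=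
  (continuous_sin.abs.integral_hasStrictDerivAt 0 x).hasDerivAt

theorem continuous_absSinPrimitive : Continuous absSinPrimitive :=
  continuous_iff_continuousAt.2 fun x => (hasDerivAt_absSinPrimitive x).continuousAt

theorem monotone_absSinPrimitive : Monotone absSinPrimitive :=
  monotone_of_hasDerivAt_nonneg hasDerivAt_absSinPrimitive fun _ => abs_nonneg _

theorem absSinPrimitive_zero : absSinPrimitive 0 = 0 :=
  intervalIntegral.integral_same

theorem absSinPrimitive_neg (x : ℝ) : absSinPrimitive (-x) = -absSinPrimitive x := by
  have h := intervalIntegral.integral_comp_neg (a := 0) (b := x) fun t => |sin t|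
  simp only [sin_neg, abs_neg, neg_zero] at h
  rw [absSinPrimitive, intervalIntegral.integral_symm, absSinPrimitive, h]

theorem absSinPrimitive_pi_div_two : absSinPrimitive (π / 2) = 1 := by
  rw [absSinPrimitive, intervalIntegral.integral_congr (g := sin) fun t ht => ?_, integral_sin]
  · simp
  · rw [uIcc_of_le (by positivity)] at ht
    exact abs_of_nonneg (sin_nonneg_of_nonneg_of_le_pi ht.1 (ht.2.trans (by linarith [pi_pos])))

theorem abs_le_pi_div_two_of_abs_absSinPrimitive_lt_one {x : ℝ}
    (hx : |absSinPrimitive x| < 1) : |x| ≤ π / 2 := by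
  rw [abs_lt] at hx
  rw [abs_le]
  constructor
  · by_contra! h
    have := monotone_absSinPrimitive h.le
    rw [absSinPrimitive_neg, absSinPrimitive_pi_div_two] at this
    linarith
  · by_contra! h
    have := monotone_absSinPrimitive h.le
    rw [absSinPrimitive_pi_div_two] at this
    linarith

theorem abs_absSinPrimitive_le_of_tendsto {α : Type*} {l : Filter α} [l.NeBot] {φ : α → ℝ}
    (hφ : Tendsto φ l (𝓝 0)) {x B : ℝ}
    (h : ∀ᶠ s in l, |absSinPrimitive x - absSinPrimitive (φ s)| ≤ B) :
    |absSinPrimitive x| ≤ B := by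
  have hlim : Tendsto (fun s => |absSinPrimitive x - absSinPrimitive (φ s)|) l
      (𝓝 |absSinPrimitive x - absSinPrimitive 0|) :=
    (((continuous_absSinPrimitive.tendsto 0).comp hφ).const_sub _).abs
  rw [absSinPrimitive_zero, sub_zero] at hlim
  exact le_of_tendsto hlim h

theorem sq_le_pi_sq_div_four_mul_sin_sq {x : ℝ} (hx : |x| ≤ π / 2) :
    x ^ 2 ≤ π ^ 2 / 4 * sin x ^ 2 := by
  have h : |x| ≤ π / 2 * |sin x| := by
    have := mul_le_mul_of_nonneg_left (mul_abs_le_abs_sin hx) (by positivity : 0 ≤ π / 2)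
    rwa [← mul_assoc, div_mul_div_comm, mul_comm π 2, div_self (by positivity), one_mul] at this
  calc x ^ 2 = |x| ^ 2 := (sq_abs x).symm
    _ ≤ (π / 2 * |sin x|) ^ 2 := by gcongr
    _ = π ^ 2 / 4 * sin x ^ 2 := by rw [mul_pow, sq_abs]; ring

theorem two_mul_abs_mul_le_add_sq_div_sq_mul {x y t : ℝ} (ht : 0 < t) :
    2 * |x * y| ≤ (y ^ 2 + x ^ 2 / t ^ 2) * t := by
  have key : (y ^ 2 + x ^ 2 / t ^ 2) * t - 2 * |x * y| = (|y| * t - |x|) ^ 2 / t := by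
    rw [abs_mul]
    field_simp
    ring_nf
    rw [sq_abs, sq_abs]
    ring
  linarith [div_nonneg (sq_nonneg (|y| * t - |x|)) ht.le]

def energyDensity (ψ : ℝ → ℝ) (r : ℝ) : ℝ := (deriv ψ r ^ 2 + sin (ψ r) ^ 2 / r ^ 2) * r

def hNormDensity (ψ : ℝ → ℝ) (r : ℝ) : ℝ := (deriv ψ r ^ 2 + ψ r ^ 2 / r ^ 2) * r

theorem energyDensity_nonneg (ψ : ℝ → ℝ) {r : ℝ} (hr : 0 < r) : 0 ≤ energyDensity ψ r := by
  unfold energyDensity; positivity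

theorem hNormDensity_nonneg (ψ : ℝ → ℝ) {r : ℝ} (hr : 0 < r) : 0 ≤ hNormDensity ψ r := by
  unfold hNormDensity; positivity

theorem energyDensity_sub_pi (ψ : ℝ → ℝ) : energyDensity (fun r => ψ r - π) = energyDensity ψ := by
  funext r
  simp only [energyDensity, deriv_sub_const, sin_sub_pi, neg_sq]

theorem hNormDensity_le_pi_sq_div_four_mul_energyDensity {ψ : ℝ → ℝ} {r : ℝ} (hr : 0 < r)
    (hψr : |ψ r| ≤ π / 2) : hNormDensity ψ r ≤ π ^ 2 / 4 * energyDensity ψ r := by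
  have hpi : 1 ≤ π ^ 2 / 4 := by nlinarith [pi_gt_three]
  have hsin := sq_le_pi_sq_div_four_mul_sin_sq hψr
  rw [hNormDensity, energyDensity, ← mul_assoc, mul_add, mul_div_assoc']
  gcongr
  exact le_mul_of_one_le_left (sq_nonneg _) hpi

theorem continuousOn_energyDensity {ψ : ℝ → ℝ} (hψ : ContDiffOn ℝ 1 ψ (Ioi 0)) :
    ContinuousOn (energyDensity ψ) (Ioi 0) := by
  have hψ' := hψ.continuousOn_deriv_of_isOpen isOpen_Ioi le_rfl
  have hψc := hψ.continuousOn
  unfold energyDensity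
  fun_prop (disch := intro r hr; exact pow_ne_zero 2 (ne_of_gt hr))

theorem continuousOn_hNormDensity {ψ : ℝ → ℝ} (hψ : ContDiffOn ℝ 1 ψ (Ioi 0)) :
    ContinuousOn (hNormDensity ψ) (Ioi 0) := by
  have hψ' := hψ.continuousOn_deriv_of_isOpen isOpen_Ioi le_rfl
  have hψc := hψ.continuousOn
  unfold hNormDensity
  fun_prop (disch := intro r hr; exact pow_ne_zero 2 (ne_of_gt hr))

theorem abs_absSinPrimitive_comp_sub_le {ψ : ℝ → ℝ} (hψ : ContDiffOn ℝ 1 ψ (Ioi 0)) {s r : ℝ}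
    (hs : 0 < s) (hsr : s ≤ r) :
    |absSinPrimitive (ψ r) - absSinPrimitive (ψ s)| ≤
      1 / 2 * ∫ t in Ioo s r, energyDensity ψ t := by
  have hsub : uIcc s r ⊆ Ioi 0 := fun t ht => hs.trans_le (uIcc_of_le hsr ▸ ht).1
  have hderiv : ∀ t ∈ uIcc s r, HasDerivAt (fun u => absSinPrimitive (ψ u))
      (|sin (ψ t)| * deriv ψ t) t := fun t ht =>
    (hasDerivAt_absSinPrimitive (ψ t)).comp t
      ((hψ.differentiableOn one_ne_zero).differentiableAt (Ioi_mem_nhds (hsub ht))).hasDerivAt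
  have hderiv_cont : ContinuousOn (fun t => |sin (ψ t)| * deriv ψ t) (uIcc s r) :=
    ((continuous_sin.comp_continuousOn hψ.continuousOn).abs.mul
      (hψ.continuousOn_deriv_of_isOpen isOpen_Ioi le_rfl)).mono hsub
  have henergy : IntervalIntegrable (fun t => 1 / 2 * energyDensity ψ t) volume s r :=
    (((continuousOn_energyDensity hψ).mono hsub).intervalIntegrable).const_mul _
  rw [← intervalIntegral.integral_eq_sub_of_hasDerivAt hderiv hderiv_cont.intervalIntegrable,
    ← integral_Ioc_eq_integral_Ioo, ← intervalIntegral.integral_of_le hsr,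
    ← intervalIntegral.integral_const_mul]
  refine (Real.norm_eq_abs _).symm.trans_le
    (intervalIntegral.norm_integral_le_of_norm_le hsr (ae_of_all _ fun t ht => ?_) henergy)
  have ht : 0 < t := hs.trans ht.1
  have := two_mul_abs_mul_le_add_sq_div_sq_mul (x := sin (ψ t)) (y := deriv ψ t) ht
  rw [Real.norm_eq_abs, abs_mul, abs_abs, ← abs_mul, energyDensity]
  linarith

theorem abs_absSinPrimitive_comp_sub_le_of_subset {ψ : ℝ → ℝ} (hψ : ContDiffOn ℝ 1 ψ (Ioi 0))
    {S : Set ℝ} (hS0 : S ⊆ Ioi 0) (henergy : IntegrableOn (energyDensity ψ) S)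
    {s r : ℝ} (hs : 0 < s) (hsr : s ≤ r) (hsrS : Ioo s r ⊆ S) :
    |absSinPrimitive (ψ r) - absSinPrimitive (ψ s)| ≤
      1 / 2 * ∫ t in S, energyDensity ψ t := by
  have hnonneg : 0 ≤ᵐ[volume.restrict S] energyDensity ψ :=
    ae_restrict_of_ae_restrict_of_subset hS0 <|
      ae_restrict_of_forall_mem measurableSet_Ioi fun _ ht => energyDensity_nonneg ψ ht
  exact (abs_absSinPrimitive_comp_sub_le hψ hs hsr).trans <| mul_le_mul_of_nonneg_left
    (setIntegral_mono_set henergy hnonneg hsrS.eventuallyLE) (by norm_num)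

theorem integrableOn_and_setIntegral_le_of_le_const_mul {α : Type*} [MeasurableSpace α]
    {μ : Measure α} {f g : α → ℝ} {S : Set α} {c : ℝ} (hS : MeasurableSet S)
    (hf : IntegrableOn f S μ) (hg : AEStronglyMeasurable g (μ.restrict S)) (hg0 : ∀ x ∈ S, 0 ≤ g x)
    (hgf : ∀ x ∈ S, g x ≤ c * f x) :
    IntegrableOn g S μ ∧ ∫ x in S, g x ∂μ ≤ c * ∫ x in S, f x ∂μ := by
  have hcf : IntegrableOn (fun x => c * f x) S μ := hf.const_mul c
  have hgi : IntegrableOn g S μ := hcf.mono' hg <| ae_restrict_of_forall_mem hS fun x hx => by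
    rw [Real.norm_eq_abs, abs_of_nonneg (hg0 x hx)]
    exact hgf x hx
  refine ⟨hgi, ?_⟩
  rw [← integral_const_mul]
  exact setIntegral_mono_on hgi hcf hS hgf

theorem hNorm_le_energy_of_abs_le_pi_div_two {ψ : ℝ → ℝ} (hψ : ContDiffOn ℝ 1 ψ (Ioi 0))
    {S : Set ℝ} (hS : MeasurableSet S) (hS0 : S ⊆ Ioi 0)
    (henergy : IntegrableOn (energyDensity ψ) S) (hψS : ∀ r ∈ S, |ψ r| ≤ π / 2) :
    IntegrableOn (hNormDensity ψ) S ∧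
      ∫ r in S, hNormDensity ψ r ≤ π ^ 2 / 4 * ∫ r in S, energyDensity ψ r :=
  integrableOn_and_setIntegral_le_of_le_const_mul hS henergy
    (((continuousOn_hNormDensity hψ).mono hS0).aestronglyMeasurable hS)
    (fun _ hr => hNormDensity_nonneg ψ (hS0 hr))
    fun r hr => hNormDensity_le_pi_sq_div_four_mul_energyDensity (hS0 hr) (hψS r hr)

theorem hNorm_le_energy_near_zero {ψ : ℝ → ℝ} (hψ : ContDiffOn ℝ 1 ψ (Ioi 0)) {r₀ : ℝ}
    (henergy : IntegrableOn (energyDensity ψ) (Ioo 0 r₀)) (hlim : Tendsto ψ (𝓝[>] 0) (𝓝 0))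
    (hsmall : ∫ r in Ioo 0 r₀, energyDensity ψ r < 2) :
    IntegrableOn (hNormDensity ψ) (Ioo 0 r₀) ∧
      ∫ r in Ioo 0 r₀, hNormDensity ψ r ≤ π ^ 2 / 4 * ∫ r in Ioo 0 r₀, energyDensity ψ r := by
  refine hNorm_le_energy_of_abs_le_pi_div_two hψ measurableSet_Ioo Ioo_subset_Ioi_self henergy
    fun r hr => abs_le_pi_div_two_of_abs_absSinPrimitive_lt_one ?_
  have hG := abs_absSinPrimitive_le_of_tendsto hlim <|
    eventually_of_mem (Ioo_mem_nhdsGT hr.1) fun s hs =>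
      abs_absSinPrimitive_comp_sub_le_of_subset hψ Ioo_subset_Ioi_self henergy hs.1 hs.2.le
        (Ioo_subset_Ioo hs.1.le hr.2.le)
  linarith

theorem hNorm_le_energy_near_top {ψ : ℝ → ℝ} (hψ : ContDiffOn ℝ 1 ψ (Ioi 0)) {r₀ : ℝ}
    (hr₀ : 0 ≤ r₀) (henergy : IntegrableOn (energyDensity ψ) (Ioi r₀))
    (hlim : Tendsto ψ atTop (𝓝 0)) (hsmall : ∫ r in Ioi r₀, energyDensity ψ r < 2) :
    IntegrableOn (hNormDensity ψ) (Ioi r₀) ∧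
      ∫ r in Ioi r₀, hNormDensity ψ r ≤ π ^ 2 / 4 * ∫ r in Ioi r₀, energyDensity ψ r := by
  have hS0 : Ioi r₀ ⊆ Ioi 0 := Ioi_subset_Ioi hr₀
  refine hNorm_le_energy_of_abs_le_pi_div_two hψ measurableSet_Ioi hS0 henergy
    fun r hr => abs_le_pi_div_two_of_abs_absSinPrimitive_lt_one ?_
  have hG := abs_absSinPrimitive_le_of_tendsto hlim <| (eventually_gt_atTop r).mono fun s hs => by
    rw [abs_sub_comm]
    exact abs_absSinPrimitive_comp_sub_le_of_subset hψ hS0 henergy (hS0 hr) hs.le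
      fun t ht => hr.trans ht.1
  linarith

/-- Coercivity of the energy near the endpoints: there are `α, C > 0`
such that for every finite-energy `C¹` map `ψ` and every `r₀ > 0`:
(a) if `ψ(0⁺) = 0` and `E₀^{r₀}(ψ,0) < α` then `‖ψ‖²_{H(r ≤ r₀)} ≤ C E₀^{r₀}(ψ,0)`;
(b) if `ψ(∞) = π` and `E_{r₀}^∞(ψ,0) < α` then `‖ψ − π‖²_{H(r ≥ r₀)} ≤ C E_{r₀}^∞(ψ,0)`. -/
theorem coercivity_near_endpoints :
    ∃ α C : ℝ, 0 < α ∧ 0 < C ∧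
      ∀ ψ : ℝ → ℝ, ContDiffOn ℝ 1 ψ (Set.Ioi 0) →
        IntegrableOn (fun r => (deriv ψ r ^ 2 + Real.sin (ψ r) ^ 2 / r ^ 2) * r)
          (Set.Ioi 0) →
        ∀ r₀ : ℝ, 0 < r₀ →
          ((Tendsto ψ (nhdsWithin 0 (Set.Ioi 0)) (nhds 0) →
            (∫ r in Set.Ioo (0:ℝ) r₀, (deriv ψ r ^ 2 + Real.sin (ψ r) ^ 2 / r ^ 2) * r) < α →
            IntegrableOn (fun r => (deriv ψ r ^ 2 + ψ r ^ 2 / r ^ 2) * r) (Set.Ioo 0 r₀) ∧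
            (∫ r in Set.Ioo (0:ℝ) r₀, (deriv ψ r ^ 2 + ψ r ^ 2 / r ^ 2) * r)
              ≤ C * ∫ r in Set.Ioo (0:ℝ) r₀,
                  (deriv ψ r ^ 2 + Real.sin (ψ r) ^ 2 / r ^ 2) * r) ∧
          (Tendsto ψ atTop (nhds Real.pi) →
            (∫ r in Set.Ioi r₀, (deriv ψ r ^ 2 + Real.sin (ψ r) ^ 2 / r ^ 2) * r) < α →
            IntegrableOn (fun r => (deriv ψ r ^ 2 + (ψ r - Real.pi) ^ 2 / r ^ 2) * r)
              (Set.Ioi r₀) ∧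
            (∫ r in Set.Ioi r₀, (deriv ψ r ^ 2 + (ψ r - Real.pi) ^ 2 / r ^ 2) * r)
              ≤ C * ∫ r in Set.Ioi r₀,
                  (deriv ψ r ^ 2 + Real.sin (ψ r) ^ 2 / r ^ 2) * r)) := by
  refine ⟨2, π ^ 2 / 4, two_pos, by positivity, fun ψ hψ henergy r₀ hr₀ =>
    ⟨fun hlim hsmall => ?_, fun hlim hsmall => ?_⟩⟩
  · exact hNorm_le_energy_near_zero hψ (henergy.mono_set Ioo_subset_Ioi_self) hlim hsmall
  · have hshift : Tendsto (fun r => ψ r - π) atTop (𝓝 0) := by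
      simpa using hlim.sub_const π
    have henergy' : IntegrableOn (energyDensity fun r => ψ r - π) (Ioi r₀) := by
      rw [energyDensity_sub_pi]
      exact henergy.mono_set (Ioi_subset_Ioi hr₀.le)
    have h := hNorm_le_energy_near_top (hψ.sub contDiffOn_const) hr₀.le henergy' hshift
      (by rwa [energyDensity_sub_pi])
    have hshift_hNorm : hNormDensity (fun r => ψ r - π) =
        fun r => (deriv ψ r ^ 2 + (ψ r - π) ^ 2 / r ^ 2) * r :=
      funext fun r => by rw [hNormDensity, deriv_sub_const]
    rw [hshift_hNorm, energyDensity_sub_pi] at h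
    exact h
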